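/- Let q be a real number with 0 < q < 1 and let x be a complex number with |x| < 1/(1−q). Then the Jackson q-integral of cos_q from 0 to x converges and equals sin_q(x); that is, (1−q)·∑_{k=0}^{∞} q^k x · cos_q(q^k x) = sin_q(x). -/

import Mathlib

open Filter Topology

/-- The `q`-basic number `[n]_q = (1 - q^n)/(1 - q)`. -/
noncomputable def qNum (q : ℝ) (n : ℕ) : ℝ := (1 - q ^ n) / (1 - q)

/-- The `q`-factorial `[n]_q! = [1]_q [2]_q ⋯ [n]_q`, with `[0]_q! = 1`. -/
noncomputable def qFact (q : ℝ) (n : ℕ) : ℝ := ∏ j ∈ Finset.range n, qNum q (j + 1)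

/-- The Gaussian binomial coefficient `[n]_q! / ([k]_q! [n-k]_q!)`. -/
noncomputable def qBinom (q : ℝ) (n k : ℕ) : ℝ := qFact q n / (qFact q k * qFact q (n - k))

/-- The `q`-exponential `e_q(z) = ∑ z^n / [n]_q!`. -/
noncomputable def qExp (q : ℝ) (z : ℂ) : ℂ := ∑' n : ℕ, z ^ n / (qFact q n : ℂ)

/-- The `q`-sine `sin_q(z) = ∑ (-1)^n z^(2n+1) / [2n+1]_q!`. -/
noncomputable def qSin (q : ℝ) (z : ℂ) : ℂ :=
  ∑' n : ℕ, (-1 : ℂ) ^ n * z ^ (2 * n + 1) / (qFact q (2 * n + 1) : ℂ)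

/-- The `q`-cosine `cos_q(z) = ∑ (-1)^n z^(2n) / [2n]_q!`. -/
noncomputable def qCos (q : ℝ) (z : ℂ) : ℂ :=
  ∑' n : ℕ, (-1 : ℂ) ^ n * z ^ (2 * n) / (qFact q (2 * n) : ℂ)

/-- The `q`-addition power `(x ⊕_q y)^n = ∑_{k=0}^n binom_q(n,k) x^k y^(n-k)`. -/
noncomputable def qAddPow (q : ℝ) (x y : ℂ) (n : ℕ) : ℂ :=
  ∑ k ∈ Finset.range (n + 1), (qBinom q n k : ℂ) * x ^ k * y ^ (n - k)

/-- The `q`-subtraction power `(x ⊖_q y)^n = ∑_{k=0}^n binom_q(n,k) (-1)^(n-k) x^k y^(n-k)`. -/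
noncomputable def qSubPow (q : ℝ) (x y : ℂ) (n : ℕ) : ℂ :=
  ∑ k ∈ Finset.range (n + 1), (qBinom q n k : ℂ) * (-1 : ℂ) ^ (n - k) * x ^ k * y ^ (n - k)

/-- The `q`-tangent `tan_q(z) = sin_q(z)/cos_q(z)`. -/
noncomputable def qTan (q : ℝ) (z : ℂ) : ℂ := qSin q z / qCos q z

/-- The second `q`-exponential `E_q(z) = ∑ q^(n(n-1)/2) z^n / [n]_q!`. -/
noncomputable def qExpE (q : ℝ) (z : ℂ) : ℂ :=
  ∑' n : ℕ, (q : ℂ) ^ (n * (n - 1) / 2) * z ^ n / (qFact q n : ℂ)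

/-!
Expand `cos_q` into its power series and integrate term by term. The Jackson integral of `t^n`
is a geometric series, `(1 - q) ∑_k q^(k(n+1)) x^(n+1) = x^(n+1) / [n+1]_q`, which sends
`z^(2n) / [2n]_q!` to `x^(2n+1) / [2n+1]_q!`. Interchanging the two summations is legitimate
because the double series converges absolutely: `|q^k x| ≤ |x|`, and `∑ |x|^n / [n]_q!` converges
by the ratio test, since `[n]_q → 1 / (1 - q)` and `|x| < 1 / (1 - q)`.
-/

section

variable {q : ℝ}

lemma qNum_pos (hq : |q| < 1) (n : ℕ) : 0 < qNum q (n + 1) := by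
  have hqn : q ^ (n + 1) < 1 := (le_abs_self _).trans_lt (by
    rw [abs_pow]; exact pow_lt_one₀ (abs_nonneg q) hq n.succ_ne_zero)
  exact div_pos (by linarith) (by linarith [le_abs_self q])

lemma qFact_pos (hq : |q| < 1) (n : ℕ) : 0 < qFact q n :=
  Finset.prod_pos fun j _ => qNum_pos hq j

lemma qFact_succ (n : ℕ) : qFact q (n + 1) = qFact q n * qNum q (n + 1) :=
  Finset.prod_range_succ _ _

lemma tendsto_qNum_atTop (hq : |q| < 1) : Tendsto (qNum q) atTop (𝓝 (1 / (1 - q))) := by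
  unfold qNum
  have := ((tendsto_pow_atTop_nhds_zero_of_abs_lt_one hq).const_sub 1).div_const (1 - q)
  simpa only [sub_zero] using this

lemma summable_pow_div_qFact (hq : |q| < 1) {c : ℝ} (hc0 : 0 ≤ c) (hc : c < 1 / (1 - q)) :
    Summable fun n => c ^ n / qFact q n := by
  have hq1 : 0 < 1 - q := by linarith [le_abs_self q]
  have hratio : Tendsto (fun n => c / qNum q (n + 1)) atTop (𝓝 (c * (1 - q))) := by
    have hnum : Tendsto (fun n => qNum q (n + 1)) atTop (𝓝 (1 / (1 - q))) :=
      (tendsto_qNum_atTop hq).comp (tendsto_add_atTop_nat 1)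
    simpa only [one_div, div_inv_eq_mul, Pi.div_def] using
      tendsto_const_nhds.div hnum (by positivity)
  obtain ⟨r, hcr, hr1⟩ := exists_between (show c * (1 - q) < 1 by rwa [lt_div_iff₀ hq1] at hc)
  refine summable_of_ratio_norm_eventually_le hr1 ?_
  filter_upwards [hratio.eventually (gt_mem_nhds hcr)] with n hn
  have hf := qFact_pos hq n
  have hf' := qFact_pos hq (n + 1)
  have hnum := qNum_pos hq n
  rw [Real.norm_of_nonneg (by positivity), Real.norm_of_nonneg (by positivity), qFact_succ,
    pow_succ]
  calc c ^ n * c / (qFact q n * qNum q (n + 1)) = c / qNum q (n + 1) * (c ^ n / qFact q n) := by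
        field_simp
    _ ≤ r * (c ^ n / qFact q n) := by gcongr

lemma hasSum_jackson_pow (hq : |q| < 1) (x : ℂ) (n : ℕ) :
    HasSum (fun k : ℕ => (1 - (q : ℂ)) * ((q : ℂ) ^ k * x) * ((q : ℂ) ^ k * x) ^ n)
      (x ^ (n + 1) / (qNum q (n + 1) : ℂ)) := by
  have hqn : ‖(q : ℂ) ^ (n + 1)‖ < 1 := by
    rw [norm_pow, Complex.norm_real, Real.norm_eq_abs]
    exact pow_lt_one₀ (abs_nonneg q) hq n.succ_ne_zero
  have hq1 : (1 : ℂ) - q ≠ 0 := by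
    exact_mod_cast (show (1 : ℝ) - q ≠ 0 by linarith [le_abs_self q])
  have hqn1 : (1 : ℂ) - (q : ℂ) ^ (n + 1) ≠ 0 :=
    sub_ne_zero.mpr fun h => by rw [← h, norm_one] at hqn; exact hqn.false
  have hval : x ^ (n + 1) / (qNum q (n + 1) : ℂ)
      = (1 - (q : ℂ)) * x ^ (n + 1) * (1 - (q : ℂ) ^ (n + 1))⁻¹ := by
    unfold qNum
    push_cast
    field_simp
  rw [hval]
  exact ((hasSum_geometric_of_norm_lt_one hqn).mul_left _).congr_fun fun k => by ring

lemma hasSum_jackson_tsum_mul_pow (hq : |q| < 1) {a : ℕ → ℂ} {m : ℕ → ℕ} {x : ℂ}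
    (ha : Summable fun n => ‖a n‖ * ‖x‖ ^ m n) :
    HasSum (fun k : ℕ =>
        (1 - (q : ℂ)) * ((q : ℂ) ^ k * x) * ∑' n, a n * ((q : ℂ) ^ k * x) ^ m n)
      (∑' n, a n * (x ^ (m n + 1) / (qNum q (m n + 1) : ℂ))) := by
  set F : ℕ × ℕ → ℂ := fun p =>
    (1 - (q : ℂ)) * ((q : ℂ) ^ p.1 * x) * (a p.2 * ((q : ℂ) ^ p.1 * x) ^ m p.2) with hF_def
  have hnorm : ∀ k, ‖(q : ℂ) ^ k * x‖ = |q| ^ k * ‖x‖ := fun k => by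
    rw [norm_mul, norm_pow, Complex.norm_real, Real.norm_eq_abs]
  have hterm : ∀ k n, ‖a n * ((q : ℂ) ^ k * x) ^ m n‖ ≤ ‖a n‖ * ‖x‖ ^ m n := fun k n => by
    rw [norm_mul, norm_pow, hnorm]
    gcongr
    exact mul_le_of_le_one_left (norm_nonneg x) (pow_le_one₀ (abs_nonneg q) hq.le)
  have hF : Summable F := by
    refine .of_norm_bounded (((summable_geometric_of_lt_one (abs_nonneg q) hq).mul_left
      (‖1 - (q : ℂ)‖ * ‖x‖)).mul_of_nonneg ha (fun _ => by positivity) fun _ => by positivity)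
      fun p => ?_
    calc ‖F p‖ = ‖1 - (q : ℂ)‖ * ‖x‖ * |q| ^ p.1 * ‖a p.2 * ((q : ℂ) ^ p.1 * x) ^ m p.2‖ := by
          rw [hF_def, norm_mul, norm_mul, hnorm]; ring
      _ ≤ _ := by gcongr; exact hterm p.1 p.2
  have hrow : ∀ k, HasSum (fun n => F (k, n))
      ((1 - (q : ℂ)) * ((q : ℂ) ^ k * x) * ∑' n, a n * ((q : ℂ) ^ k * x) ^ m n) := fun k =>
    (Summable.of_norm_bounded ha (hterm k)).hasSum.mul_left ((1 - (q : ℂ)) * ((q : ℂ) ^ k * x))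
  have hcol : ∀ n, HasSum (fun k => F (k, n)) (a n * (x ^ (m n + 1) / (qNum q (m n + 1) : ℂ))) :=
    fun n => ((hasSum_jackson_pow hq x (m n)).mul_left (a n)).congr_fun fun k => by ring
  -- Fubini: summing `F` over `n` first gives the Jackson sum, over `k` first the termwise
  -- integrals.
  rw [(hF.prod_symm.hasSum.prod_fiberwise hcol).tsum_eq]
  convert hF.hasSum.prod_fiberwise hrow using 1
  exact (Equiv.prodComm ℕ ℕ).tsum_eq F

end

/-- The Jackson q-integral of `cos_q` from 0 to `x` converges and equals `sin_q(x)`. -/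
theorem jackson_integral_qCos (q : ℝ) (hq0 : 0 < q) (hq1 : q < 1) (x : ℂ)
    (hx : ‖x‖ < 1 / (1 - q)) :
    HasSum (fun k : ℕ => (1 - (q : ℂ)) * ((q : ℂ) ^ k * x) * qCos q ((q : ℂ) ^ k * x))
      (qSin q x) := by
  have hq : |q| < 1 := abs_lt.mpr ⟨by linarith, hq1⟩
  set a : ℕ → ℂ := fun n => (-1 : ℂ) ^ n / (qFact q (2 * n) : ℂ)
  have ha : Summable fun n => ‖a n‖ * ‖x‖ ^ (2 * n) :=
    ((summable_pow_div_qFact hq (norm_nonneg x) hx).comp_injective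
      (mul_right_injective₀ two_ne_zero)).congr fun n => by
        simp only [a, norm_div, norm_pow, norm_neg, norm_one, one_pow, Complex.norm_real,
          Real.norm_of_nonneg (qFact_pos hq (2 * n)).le, Function.comp_apply]
        ring
  have hcos : ∀ z, qCos q z = ∑' n, a n * z ^ (2 * n) := fun z =>
    tsum_congr fun n => div_mul_eq_mul_div _ _ _ |>.symm
  have hsin : qSin q x = ∑' n, a n * (x ^ (2 * n + 1) / (qNum q (2 * n + 1) : ℂ)) :=
    tsum_congr fun n => by rw [qFact_succ]; push_cast; ring
  simpa only [hcos, hsin] using hasSum_jackson_tsum_mul_pow hq ha
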